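/- For all n ≥ 1, the number of permutations of length n avoiding both 132 and 321 equals C(n, 2) + 1. -/

import Mathlib

open scoped Classical

set_option maxRecDepth 4000

/-- The word `π₁π₂⋯π_n` of a permutation of `{1,…,n}`, with values in `{1,…,n}`. -/
def permWord {n : ℕ} (π : Equiv.Perm (Fin n)) : List ℕ :=
  List.ofFn fun i => (π i : ℕ) + 1

/-- The word `l` contains the word `ρ` as a (classical) pattern. -/
def ContainsPat (l ρ : List ℕ) : Prop :=
  ∃ f : Fin ρ.length → Fin l.length, StrictMono f ∧
    ∀ a b : Fin ρ.length, ρ.get a < ρ.get b ↔ l.get (f a) < l.get (f b)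

/-- `l` avoids every pattern in the list `B`. -/
def AvoidsAll (l : List ℕ) (B : List (List ℕ)) : Prop :=
  ∀ ρ ∈ B, ¬ ContainsPat l ρ

/-- Number of ascents of the word `l`. -/
def ascents (l : List ℕ) : ℕ :=
  ((Finset.range (l.length - 1)).filter fun i => l.getD i 0 < l.getD (i + 1) 0).card

/-- Number of descents of the word `l`. -/
def descents (l : List ℕ) : ℕ :=
  ((Finset.range (l.length - 1)).filter fun i => l.getD (i + 1) 0 < l.getD i 0).card

/-- Number of double ascents of the word `l`. -/
def dascents (l : List ℕ) : ℕ :=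
  ((Finset.range (l.length - 2)).filter fun i =>
    l.getD i 0 < l.getD (i + 1) 0 ∧ l.getD (i + 1) 0 < l.getD (i + 2) 0).card

/-- Number of double descents of the word `l`. -/
def ddescents (l : List ℕ) : ℕ :=
  ((Finset.range (l.length - 2)).filter fun i =>
    l.getD (i + 1) 0 < l.getD i 0 ∧ l.getD (i + 2) 0 < l.getD (i + 1) 0).card

/-- Number of peaks of the word `l`. -/
def peaks (l : List ℕ) : ℕ :=
  ((Finset.range (l.length - 2)).filter fun i =>
    l.getD i 0 < l.getD (i + 1) 0 ∧ l.getD (i + 2) 0 < l.getD (i + 1) 0).card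

/-- Number of valleys of the word `l`. -/
def valleys (l : List ℕ) : ℕ :=
  ((Finset.range (l.length - 2)).filter fun i =>
    l.getD (i + 1) 0 < l.getD i 0 ∧ l.getD (i + 1) 0 < l.getD (i + 2) 0).card

/-- `acount n k stat B` is the number of permutations of `{1,…,n}` avoiding all
patterns in `B` whose statistic `stat` equals `k`. -/
noncomputable def acount (n k : ℕ) (stat : List ℕ → ℕ) (B : List (List ℕ)) : ℕ :=
  (Finset.univ.filter fun π : Equiv.Perm (Fin n) =>
    AvoidsAll (permWord π) B ∧ stat (permWord π) = k).card

/- ### Auxiliary machinery -/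

def Qcond {n : ℕ} (π : Equiv.Perm (Fin n)) : Prop :=
  ∀ i j k : Fin n, i < j → j < k → π k < π j → π k < π i ∧ π i < π j

lemma permWord_length {n : ℕ} (π : Equiv.Perm (Fin n)) : (permWord π).length = n := by
  simp [permWord]

lemma permWord_get {n : ℕ} (π : Equiv.Perm (Fin n)) (i : Fin (permWord π).length) :
    (permWord π).get i = (π (Fin.cast (permWord_length π) i) : ℕ) + 1 := by
  simp [permWord, List.get_ofFn]
  show (permWord π)[(i : ℕ)] = _
  exact List.getElem_ofFn _

lemma permWord_getElem {n : ℕ} (π : Equiv.Perm (Fin n)) (m : ℕ) (h : m < (permWord π).length) :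
    (permWord π)[m] = (π ⟨m, (permWord_length π) ▸ h⟩ : ℕ) + 1 := by
  simp [permWord]

lemma contains132_iff {n : ℕ} (π : Equiv.Perm (Fin n)) :
    ContainsPat (permWord π) [1,3,2] ↔
      ∃ i j k : Fin n, i < j ∧ j < k ∧ π i < π k ∧ π k < π j := by
  constructor
  · rintro ⟨f, hf, hiff⟩
    refine ⟨Fin.cast (permWord_length π) (f ⟨0, by norm_num⟩),
      Fin.cast (permWord_length π) (f ⟨1, by norm_num⟩),
      Fin.cast (permWord_length π) (f ⟨2, by norm_num⟩), ?_, ?_, ?_, ?_⟩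
    · exact hf (show (⟨0, by norm_num⟩ : Fin ([1,3,2] : List ℕ).length) < ⟨1, by norm_num⟩ by
        rw [Fin.lt_def]; norm_num)
    · exact hf (show (⟨1, by norm_num⟩ : Fin ([1,3,2] : List ℕ).length) < ⟨2, by norm_num⟩ by
        rw [Fin.lt_def]; norm_num)
    · have h := (hiff ⟨0, by norm_num⟩ ⟨2, by norm_num⟩).mp (by norm_num)
      rw [permWord_get, permWord_get] at h
      rw [Fin.lt_def]; omega
    · have h := (hiff ⟨2, by norm_num⟩ ⟨1, by norm_num⟩).mp (by norm_num)
      rw [permWord_get, permWord_get] at h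
      rw [Fin.lt_def]; omega
  · rintro ⟨i, j, k, hij, hjk, h1, h2⟩
    rw [Fin.lt_def] at hij hjk h1 h2
    refine ⟨fun a => Fin.cast (permWord_length π).symm
        (if (a:ℕ) = 0 then i else if (a:ℕ) = 1 then j else k), ?_, ?_⟩
    · intro a b hab
      rw [Fin.lt_def] at hab ⊢
      simp only [Fin.coe_cast]
      have ha := a.isLt; have hb := b.isLt
      norm_num at ha hb
      split_ifs <;> omega
    · intro a b
      have ha := a.isLt; have hb := b.isLt
      norm_num at ha hb
      obtain ⟨a, hA⟩ := a; obtain ⟨b, hB⟩ := b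
      interval_cases a <;> interval_cases b <;>
        · norm_num [permWord_getElem]
          try omega

lemma contains321_iff {n : ℕ} (π : Equiv.Perm (Fin n)) :
    ContainsPat (permWord π) [3,2,1] ↔
      ∃ i j k : Fin n, i < j ∧ j < k ∧ π k < π j ∧ π j < π i := by
  constructor
  · rintro ⟨f, hf, hiff⟩
    refine ⟨Fin.cast (permWord_length π) (f ⟨0, by norm_num⟩),
      Fin.cast (permWord_length π) (f ⟨1, by norm_num⟩),
      Fin.cast (permWord_length π) (f ⟨2, by norm_num⟩), ?_, ?_, ?_, ?_⟩
    · exact hf (show (⟨0, by norm_num⟩ : Fin ([3,2,1] : List ℕ).length) < ⟨1, by norm_num⟩ by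
        rw [Fin.lt_def]; norm_num)
    · exact hf (show (⟨1, by norm_num⟩ : Fin ([3,2,1] : List ℕ).length) < ⟨2, by norm_num⟩ by
        rw [Fin.lt_def]; norm_num)
    · have h := (hiff ⟨2, by norm_num⟩ ⟨1, by norm_num⟩).mp (by norm_num)
      rw [permWord_get, permWord_get] at h
      rw [Fin.lt_def]; omega
    · have h := (hiff ⟨1, by norm_num⟩ ⟨0, by norm_num⟩).mp (by norm_num)
      rw [permWord_get, permWord_get] at h
      rw [Fin.lt_def]; omega
  · rintro ⟨i, j, k, hij, hjk, h1, h2⟩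
    rw [Fin.lt_def] at hij hjk h1 h2
    refine ⟨fun a => Fin.cast (permWord_length π).symm
        (if (a:ℕ) = 0 then i else if (a:ℕ) = 1 then j else k), ?_, ?_⟩
    · intro a b hab
      rw [Fin.lt_def] at hab ⊢
      simp only [Fin.coe_cast]
      have ha := a.isLt; have hb := b.isLt
      norm_num at ha hb
      split_ifs <;> omega
    · intro a b
      have ha := a.isLt; have hb := b.isLt
      norm_num at ha hb
      obtain ⟨a, hA⟩ := a; obtain ⟨b, hB⟩ := b
      interval_cases a <;> interval_cases b <;>
        · norm_num [permWord_getElem]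
          try omega

lemma avoidsAll_iff {n : ℕ} (π : Equiv.Perm (Fin n)) :
    AvoidsAll (permWord π) [[1,3,2],[3,2,1]] ↔ Qcond π := by
  have h132 := contains132_iff π
  have h321 := contains321_iff π
  constructor
  · intro h i j k hij hjk hkj
    have n132 := h [1,3,2] (by simp)
    have n321 := h [3,2,1] (by simp)
    rw [h132] at n132
    rw [h321] at n321
    constructor
    · by_contra hc
      push_neg at hc
      have hne : π i ≠ π k := fun he => (π.injective he ▸ (hij.trans hjk)).false
      have : π i < π k := lt_of_le_of_ne hc hne
      exact n132 ⟨i, j, k, hij, hjk, this, hkj⟩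
    · by_contra hc
      push_neg at hc
      have hne : π j ≠ π i := fun he => (π.injective he ▸ hij).false
      have : π j < π i := lt_of_le_of_ne hc hne
      exact n321 ⟨i, j, k, hij, hjk, hkj, this⟩
  · intro hQ ρ hρ
    simp only [List.mem_cons, List.mem_singleton, List.not_mem_nil, or_false] at hρ
    rcases hρ with rfl | rfl
    · rw [h132]
      rintro ⟨i, j, k, hij, hjk, h1, h2⟩
      exact absurd h1 (not_lt.2 (hQ i j k hij hjk h2).1.le)
    · rw [h321]
      rintro ⟨i, j, k, hij, hjk, h1, h2⟩
      exact absurd h2 (not_lt.2 (hQ i j k hij hjk h1).2.le)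

def rotf {n : ℕ} (a b : ℕ) (i : Fin n) : Fin n :=
  if h : (i : ℕ) < b ∧ b ≤ n then
    ⟨((i : ℕ) + a) % b, lt_of_lt_of_le (Nat.mod_lt _ (by omega)) h.2⟩
  else i

lemma mod_cases (x b : ℕ) (hb : 0 < b) (h : x < 2 * b) :
    (x % b = x ∧ x < b) ∨ (x % b = x - b ∧ b ≤ x) := by
  rcases lt_or_ge x b with h1 | h1
  · exact Or.inl ⟨Nat.mod_eq_of_lt h1, h1⟩
  · refine Or.inr ⟨?_, h1⟩
    rw [Nat.mod_eq_sub_mod h1, Nat.mod_eq_of_lt (by omega)]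

lemma rotf_injective {n : ℕ} (a b : ℕ) : Function.Injective (rotf (n := n) a b) := by
  intro i j hij
  unfold rotf at hij
  split_ifs at hij with h1 h2 h2
  · apply Fin.ext
    have hv := congrArg Fin.val hij
    simp only at hv
    have hb : 0 < b := by omega
    have : (i : ℕ) % b = (j : ℕ) % b := by
      have := Nat.ModEq.add_right_cancel' a (hv : ((i:ℕ) + a) ≡ ((j:ℕ) + a) [MOD b])
      exact this
    rwa [Nat.mod_eq_of_lt h1.1, Nat.mod_eq_of_lt h2.1] at this
  · exfalso
    have hv := congrArg Fin.val hij
    simp only at hv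
    have : ((i:ℕ) + a) % b < b := Nat.mod_lt _ (by omega)
    omega
  · exfalso
    have hv := congrArg Fin.val hij
    simp only at hv
    have : ((j:ℕ) + a) % b < b := Nat.mod_lt _ (by omega)
    omega
  · exact hij

noncomputable def rot {n : ℕ} (a b : ℕ) : Equiv.Perm (Fin n) :=
  Equiv.ofBijective _ (Finite.injective_iff_bijective.mp (rotf_injective a b))

lemma rot_apply {n : ℕ} (a b : ℕ) (i : Fin n) : rot a b i = rotf a b i := rfl

lemma rot_val_lt {n : ℕ} (a b : ℕ) (i : Fin n) (h1 : (i:ℕ) < b) (h2 : b ≤ n) :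
    (rot a b i : ℕ) = ((i:ℕ) + a) % b := by
  rw [rot_apply, rotf, dif_pos ⟨h1, h2⟩]

lemma rot_val_ge {n : ℕ} (a b : ℕ) (i : Fin n) (h1 : ¬ ((i:ℕ) < b)) :
    rot a b i = i := by
  rw [rot_apply, rotf, dif_neg (by tauto)]

lemma Qcond_one {n : ℕ} : Qcond (1 : Equiv.Perm (Fin n)) := by
  intro i j k hij hjk hkj
  simp only [Equiv.Perm.coe_one, id_eq] at hkj
  exact absurd hkj (not_lt.2 hjk.le)

lemma Qcond_rot {n a b : ℕ} (ha : 0 < a) (hab : a < b) (hbn : b ≤ n) :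
    Qcond (rot a b : Equiv.Perm (Fin n)) := by
  intro i j k hij hjk hkj
  simp only [Fin.lt_def] at hij hjk hkj ⊢
  have hb : 0 < b := by omega
  -- first: k < b must hold
  by_cases hk : (k:ℕ) < b
  · have hj : (j:ℕ) < b := lt_trans hjk hk
    have hi : (i:ℕ) < b := lt_trans hij hj
    rw [rot_val_lt a b k hk hbn, rot_val_lt a b j hj hbn] at hkj
    rw [rot_val_lt a b k hk hbn, rot_val_lt a b i hi hbn, rot_val_lt a b j hj hbn]
    have mi := mod_cases ((i:ℕ) + a) b hb (by omega)
    have mj := mod_cases ((j:ℕ) + a) b hb (by omega)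
    have mk := mod_cases ((k:ℕ) + a) b hb (by omega)
    constructor <;> omega
  · exfalso
    have hkk := rot_val_ge a b k hk
    by_cases hj : (j:ℕ) < b
    · rw [hkk] at hkj
      have : (rot a b j : ℕ) < b := by
        rw [rot_val_lt a b j hj hbn]; exact Nat.mod_lt _ hb
      omega
    · rw [hkk, rot_val_ge a b j hj] at hkj
      omega

lemma main_struct {n : ℕ} (π : Equiv.Perm (Fin n)) (hQ : Qcond π) (hne : π ≠ 1) :
    ∃ a b : ℕ, 0 < a ∧ a < b ∧ b ≤ n ∧ ∀ i : Fin n, π i = rotf a b i := by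
  have hn : 0 < n := by
    rcases Nat.eq_zero_or_pos n with h | h
    · subst h; exact absurd (Subsingleton.elim π 1) hne
    · exact h
  have notltz : ∀ x : Fin n, ¬ x < (⟨0, hn⟩ : Fin n) := by
    intro x hx; simp [Fin.lt_def] at hx
  -- Step 1 : π 0 ≠ 0
  have hzn : π ⟨0, hn⟩ ≠ ⟨0, hn⟩ := by
    intro h0
    apply hne
    have hmono : StrictMono π := by
      intro j k hjk
      by_cases hj : j = ⟨0, hn⟩
      · subst hj
        rw [h0]
        have h1 : π k ≠ ⟨0, hn⟩ := by
          intro hc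
          exact absurd (π.injective (hc.trans h0.symm)) (ne_of_gt hjk)
        rw [Fin.lt_def]
        have h2 : (π k : ℕ) ≠ 0 := fun hv => h1 (Fin.ext (by simpa using hv))
        simpa using Nat.pos_of_ne_zero h2
      · have hzj : (⟨0, hn⟩ : Fin n) < j := by
          rw [Fin.lt_def]
          have : (j : ℕ) ≠ 0 := fun hv => hj (Fin.ext (by simpa using hv))
          simpa using Nat.pos_of_ne_zero this
        by_contra hc
        push_neg at hc
        have hlt : π k < π j :=
          lt_of_le_of_ne hc fun he => (ne_of_gt hjk) (π.injective he)
        have := (hQ ⟨0, hn⟩ j k hzj hjk hlt).1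
        rw [h0] at this
        exact notltz _ this
    have hsub := Subsingleton.elim
      (StrictMono.orderIsoOfSurjective π hmono π.surjective) (OrderIso.refl (Fin n))
    apply Equiv.ext
    intro i
    have := congrArg (fun e : Fin n ≃o Fin n => e i) hsub
    simpa [StrictMono.coe_orderIsoOfSurjective] using this
  -- a := value at 0
  have ha : 0 < (π ⟨0, hn⟩ : ℕ) := by
    refine Nat.pos_of_ne_zero fun hv => hzn (Fin.ext (by simpa using hv))
  have hπp : π (π.symm ⟨0, hn⟩) = ⟨0, hn⟩ := π.apply_symm_apply _
  have hpz : 0 < (π.symm ⟨0, hn⟩ : ℕ) := by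
    refine Nat.pos_of_ne_zero fun hv => ?_
    have : π.symm ⟨0, hn⟩ = ⟨0, hn⟩ := Fin.ext (by simpa using hv)
    rw [this] at hπp
    exact hzn hπp
  -- run 1 increasing
  have hrun1 : ∀ j k : Fin n, j < k → k < π.symm ⟨0, hn⟩ → π j < π k := by
    intro j k hjk hkp
    have h1 : π k ≠ ⟨0, hn⟩ := by
      intro hc
      rw [← hπp] at hc
      exact (ne_of_lt hkp) (π.injective hc)
    have h2 : π (π.symm ⟨0, hn⟩) < π k := by
      rw [hπp, Fin.lt_def]
      have : (π k : ℕ) ≠ 0 := fun hv => h1 (Fin.ext (by simpa using hv))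
      simpa using Nat.pos_of_ne_zero this
    exact (hQ j k (π.symm ⟨0, hn⟩) hjk hkp h2).2
  -- run 2 increasing
  have hrun2 : ∀ j k : Fin n, π.symm ⟨0, hn⟩ ≤ j → j < k → π j < π k := by
    intro j k hpj hjk
    by_contra hc
    push_neg at hc
    have hlt : π k < π j :=
      lt_of_le_of_ne hc fun he => (ne_of_gt hjk) (π.injective he)
    rcases eq_or_lt_of_le hpj with h | h
    · rw [← h, hπp] at hlt
      exact notltz _ hlt
    · have := (hQ (π.symm ⟨0, hn⟩) j k h hjk hlt).1
      rw [hπp] at this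
      exact notltz _ this
  -- run 1 values
  have hrun1val : ∀ m : ℕ, ∀ hm : m < (π.symm ⟨0, hn⟩ : ℕ),
      (π ⟨m, lt_trans hm (π.symm ⟨0, hn⟩).isLt⟩ : ℕ) = (π ⟨0, hn⟩ : ℕ) + m := by
    intro m
    induction m using Nat.strong_induction_on with
    | _ m IH =>
    intro hm
    match m, hm with
    | 0, hm => simp
    | (t+1), hm =>
      have hpt : t < (π.symm ⟨0, hn⟩ : ℕ) := by omega
      have hIH := IH t (by omega) hpt
      have htn : t < n := lt_trans hpt (π.symm ⟨0, hn⟩).isLt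
      have htn1 : t + 1 < n := lt_trans hm (π.symm ⟨0, hn⟩).isLt
      have hm1 : π ⟨t, htn⟩ < π ⟨t+1, htn1⟩ := by
        refine hrun1 _ _ ?_ ?_ <;> rw [Fin.lt_def] <;> simpa using hm
      rw [Fin.lt_def] at hm1
      by_contra hgt
      have hv : (π ⟨0, hn⟩ : ℕ) + t + 1 < (π ⟨t+1, htn1⟩ : ℕ) := by omega
      have hvn : (π ⟨0, hn⟩ : ℕ) + t + 1 < n := lt_trans hv (π ⟨t+1, htn1⟩).isLt
      have hπk : π (π.symm ⟨(π ⟨0, hn⟩ : ℕ) + t + 1, hvn⟩) = ⟨(π ⟨0, hn⟩ : ℕ) + t + 1, hvn⟩ :=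
        π.apply_symm_apply _
      have hkp : (π.symm ⟨0, hn⟩ : ℕ) ≤ (π.symm ⟨(π ⟨0, hn⟩ : ℕ) + t + 1, hvn⟩ : ℕ) := by
        by_contra hcon
        push_neg at hcon
        -- k < p : then k < t+1 by monotonicity, so IH applies
        have hklt : (π.symm ⟨(π ⟨0, hn⟩ : ℕ) + t + 1, hvn⟩ : ℕ) < t + 1 := by
          by_contra hcon2
          push_neg at hcon2
          rcases eq_or_lt_of_le hcon2 with he | hl
          · -- k = t+1 : π k = π ⟨t+1⟩ has value a+t+1, contradicting hv
            have : π.symm ⟨(π ⟨0, hn⟩ : ℕ) + t + 1, hvn⟩ = ⟨t+1, htn1⟩ := Fin.ext (by simpa using he.symm)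
            rw [this] at hπk
            have := congrArg Fin.val hπk
            simp at this
            omega
          · have := hrun1 ⟨t+1, htn1⟩ (π.symm ⟨(π ⟨0, hn⟩ : ℕ) + t + 1, hvn⟩)
              (by rw [Fin.lt_def]; simpa using hl) (by rw [Fin.lt_def]; exact hcon)
            rw [Fin.lt_def, hπk] at this
            simp at this
            omega
        have hkt : (π.symm ⟨(π ⟨0, hn⟩ : ℕ) + t + 1, hvn⟩ : ℕ) < (π.symm ⟨0, hn⟩ : ℕ) := hcon
        have := IH (π.symm ⟨(π ⟨0, hn⟩ : ℕ) + t + 1, hvn⟩ : ℕ) hklt hkt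
        have heq : (⟨(π.symm ⟨(π ⟨0, hn⟩ : ℕ) + t + 1, hvn⟩ : ℕ), _⟩ : Fin n) =
            π.symm ⟨(π ⟨0, hn⟩ : ℕ) + t + 1, hvn⟩ := Fin.ext rfl
        rw [heq, hπk] at this
        simp at this
        omega
      -- now p ≤ k, apply Q with (t, t+1, k)
      have hQa := hQ ⟨t, htn⟩ ⟨t+1, htn1⟩ (π.symm ⟨(π ⟨0, hn⟩ : ℕ) + t + 1, hvn⟩)
        (by rw [Fin.lt_def]; simp)
        (by rw [Fin.lt_def]; simp only; omega)
        (by rw [Fin.lt_def, hπk]; simp only; omega)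
      have := hQa.1
      rw [Fin.lt_def, hπk] at this
      simp only at this
      omega
  -- run 2 low values
  have hrun2val : ∀ m : ℕ, ∀ hm : m < (π ⟨0, hn⟩ : ℕ),
      ∃ h : (π.symm ⟨0, hn⟩ : ℕ) + m < n, (π ⟨(π.symm ⟨0, hn⟩ : ℕ) + m, h⟩ : ℕ) = m := by
    intro m
    induction m using Nat.strong_induction_on with
    | _ m IH =>
    intro hm
    match m, hm with
    | 0, hm =>
      refine ⟨by simpa using (π.symm ⟨0, hn⟩).isLt, ?_⟩
      have : (⟨(π.symm ⟨0, hn⟩ : ℕ) + 0, by simpa using (π.symm ⟨0, hn⟩).isLt⟩ : Fin n) =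
          π.symm ⟨0, hn⟩ := Fin.ext (by simp)
      rw [this, hπp]
    | (t+1), hm =>
      obtain ⟨hpt, hIH⟩ := IH t (by omega) (by omega)
      have hvn : t + 1 < n := lt_trans hm (π ⟨0, hn⟩).isLt
      have hπk : π (π.symm ⟨t+1, hvn⟩) = ⟨t+1, hvn⟩ := π.apply_symm_apply _
      -- position of value t+1 is ≥ p
      have hkp : (π.symm ⟨0, hn⟩ : ℕ) ≤ (π.symm ⟨t+1, hvn⟩ : ℕ) := by
        by_contra hcon
        push_neg at hcon
        have := hrun1val (π.symm ⟨t+1, hvn⟩ : ℕ) hcon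
        have heq : (⟨(π.symm ⟨t+1, hvn⟩ : ℕ), _⟩ : Fin n) = π.symm ⟨t+1, hvn⟩ := Fin.ext rfl
        rw [heq, hπk] at this
        simp at this
        omega
      -- position of value t+1 is > p + t
      have hkgt : (π.symm ⟨0, hn⟩ : ℕ) + t < (π.symm ⟨t+1, hvn⟩ : ℕ) := by
        rcases lt_trichotomy ((π.symm ⟨0, hn⟩ : ℕ) + t) (π.symm ⟨t+1, hvn⟩ : ℕ) with h | h | h
        · exact h
        · exfalso
          have heq : (⟨(π.symm ⟨0, hn⟩ : ℕ) + t, hpt⟩ : Fin n) = π.symm ⟨t+1, hvn⟩ :=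
            Fin.ext (by simpa using h)
          rw [heq, hπk] at hIH
          simp at hIH
        · exfalso
          -- k < p + t, k ≥ p: k = p + m' with m' < t
          obtain ⟨h', hv'⟩ := IH ((π.symm ⟨t+1, hvn⟩ : ℕ) - (π.symm ⟨0, hn⟩ : ℕ))
            (by omega) (by omega)
          have heq : (⟨(π.symm ⟨0, hn⟩ : ℕ) + ((π.symm ⟨t+1, hvn⟩ : ℕ) - (π.symm ⟨0, hn⟩ : ℕ)), h'⟩ : Fin n) =
              π.symm ⟨t+1, hvn⟩ := Fin.ext (by simp only; omega)
          rw [heq, hπk] at hv'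
          simp at hv'
          omega
      have hpos : (π.symm ⟨0, hn⟩ : ℕ) + (t+1) < n :=
        lt_of_le_of_lt (by omega) (π.symm ⟨t+1, hvn⟩).isLt
      refine ⟨hpos, ?_⟩
      rcases lt_trichotomy ((π.symm ⟨0, hn⟩ : ℕ) + (t+1)) (π.symm ⟨t+1, hvn⟩ : ℕ) with h | h | h
      · exfalso
        -- i < k: then t = π⟨p+t⟩ < π i < π k = t+1, impossible
        have h1 : π ⟨(π.symm ⟨0, hn⟩ : ℕ) + t, hpt⟩ < π ⟨(π.symm ⟨0, hn⟩ : ℕ) + (t+1), hpos⟩ := by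
          refine hrun2 _ _ ?_ ?_ <;> simp [Fin.le_def, Fin.lt_def]
        have h2 : π ⟨(π.symm ⟨0, hn⟩ : ℕ) + (t+1), hpos⟩ < π (π.symm ⟨t+1, hvn⟩) := by
          refine hrun2 _ _ ?_ ?_ <;> simp only [Fin.le_def, Fin.lt_def] <;> omega
        rw [Fin.lt_def] at h1 h2
        rw [hπk] at h2
        simp only at h1 h2
        omega
      · have heq : (⟨(π.symm ⟨0, hn⟩ : ℕ) + (t+1), hpos⟩ : Fin n) = π.symm ⟨t+1, hvn⟩ :=
          Fin.ext (by simpa using h)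
        rw [heq, hπk]
      · omega
  -- b := p + a ≤ n
  have hbn : (π.symm ⟨0, hn⟩ : ℕ) + (π ⟨0, hn⟩ : ℕ) ≤ n := by
    obtain ⟨h, _⟩ := hrun2val ((π ⟨0, hn⟩ : ℕ) - 1) (by omega)
    omega
  -- tail values
  have htail : ∀ m : ℕ, ∀ h : (π.symm ⟨0, hn⟩ : ℕ) + (π ⟨0, hn⟩ : ℕ) + m < n,
      (π ⟨(π.symm ⟨0, hn⟩ : ℕ) + (π ⟨0, hn⟩ : ℕ) + m, h⟩ : ℕ) =
        (π.symm ⟨0, hn⟩ : ℕ) + (π ⟨0, hn⟩ : ℕ) + m := by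
    intro m
    induction m using Nat.strong_induction_on with
    | _ m IH =>
    intro h
    have hπk : π (π.symm ⟨(π.symm ⟨0, hn⟩ : ℕ) + (π ⟨0, hn⟩ : ℕ) + m, h⟩) =
        ⟨(π.symm ⟨0, hn⟩ : ℕ) + (π ⟨0, hn⟩ : ℕ) + m, h⟩ := π.apply_symm_apply _
    -- the position k of value b + m satisfies k ≥ b
    have hk1 : ¬ (π.symm ⟨(π.symm ⟨0, hn⟩ : ℕ) + (π ⟨0, hn⟩ : ℕ) + m, h⟩ : ℕ) < (π.symm ⟨0, hn⟩ : ℕ) := by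
      intro hc
      have := hrun1val _ hc
      have heq : (⟨(π.symm ⟨(π.symm ⟨0, hn⟩ : ℕ) + (π ⟨0, hn⟩ : ℕ) + m, h⟩ : ℕ), _⟩ : Fin n) =
          π.symm ⟨(π.symm ⟨0, hn⟩ : ℕ) + (π ⟨0, hn⟩ : ℕ) + m, h⟩ := Fin.ext rfl
      rw [heq, hπk] at this
      simp at this
      omega
    have hk2 : ¬ (π.symm ⟨(π.symm ⟨0, hn⟩ : ℕ) + (π ⟨0, hn⟩ : ℕ) + m, h⟩ : ℕ) <
        (π.symm ⟨0, hn⟩ : ℕ) + (π ⟨0, hn⟩ : ℕ) := by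
      intro hc
      obtain ⟨h', hv'⟩ := hrun2val
        ((π.symm ⟨(π.symm ⟨0, hn⟩ : ℕ) + (π ⟨0, hn⟩ : ℕ) + m, h⟩ : ℕ) - (π.symm ⟨0, hn⟩ : ℕ))
        (by omega)
      have heq : (⟨(π.symm ⟨0, hn⟩ : ℕ) + ((π.symm ⟨(π.symm ⟨0, hn⟩ : ℕ) + (π ⟨0, hn⟩ : ℕ) + m, h⟩ : ℕ) - (π.symm ⟨0, hn⟩ : ℕ)), h'⟩ : Fin n) =
          π.symm ⟨(π.symm ⟨0, hn⟩ : ℕ) + (π ⟨0, hn⟩ : ℕ) + m, h⟩ := Fin.ext (by simp only; omega)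
      rw [heq, hπk] at hv'
      simp at hv'
      omega
    rcases lt_trichotomy (π.symm ⟨(π.symm ⟨0, hn⟩ : ℕ) + (π ⟨0, hn⟩ : ℕ) + m, h⟩ : ℕ)
      ((π.symm ⟨0, hn⟩ : ℕ) + (π ⟨0, hn⟩ : ℕ) + m) with hlt | heq0 | hgt
    · exfalso
      have := IH ((π.symm ⟨(π.symm ⟨0, hn⟩ : ℕ) + (π ⟨0, hn⟩ : ℕ) + m, h⟩ : ℕ) -
          ((π.symm ⟨0, hn⟩ : ℕ) + (π ⟨0, hn⟩ : ℕ))) (by omega)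
          (by omega)
      have heq : (⟨(π.symm ⟨0, hn⟩ : ℕ) + (π ⟨0, hn⟩ : ℕ) + ((π.symm ⟨(π.symm ⟨0, hn⟩ : ℕ) + (π ⟨0, hn⟩ : ℕ) + m, h⟩ : ℕ) - ((π.symm ⟨0, hn⟩ : ℕ) + (π ⟨0, hn⟩ : ℕ))), by omega⟩ : Fin n) =
          π.symm ⟨(π.symm ⟨0, hn⟩ : ℕ) + (π ⟨0, hn⟩ : ℕ) + m, h⟩ := Fin.ext (by simp only; omega)
      rw [heq, hπk] at this
      simp at this
      omega
    · have heq : (⟨(π.symm ⟨0, hn⟩ : ℕ) + (π ⟨0, hn⟩ : ℕ) + m, h⟩ : Fin n) =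
          π.symm ⟨(π.symm ⟨0, hn⟩ : ℕ) + (π ⟨0, hn⟩ : ℕ) + m, h⟩ := Fin.ext (by simpa using heq0.symm)
      rw [heq, hπk]
    · exfalso
      -- i < k, so π i < π k = b + m; show π i ≥ b + m: contradiction via value analysis
      have hππ : π ⟨(π.symm ⟨0, hn⟩ : ℕ) + (π ⟨0, hn⟩ : ℕ) + m, h⟩ <
          π (π.symm ⟨(π.symm ⟨0, hn⟩ : ℕ) + (π ⟨0, hn⟩ : ℕ) + m, h⟩) := by
        refine hrun2 _ _ ?_ ?_ <;> simp only [Fin.le_def, Fin.lt_def] <;> omega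
      rw [Fin.lt_def, hπk] at hππ
      simp only at hππ
      -- now (π i).val < b + m ; rule out small values
      set iv := (π ⟨(π.symm ⟨0, hn⟩ : ℕ) + (π ⟨0, hn⟩ : ℕ) + m, h⟩ : ℕ) with hiv
      have hlow : ¬ iv < (π ⟨0, hn⟩ : ℕ) := by
        intro hc
        obtain ⟨h', hv'⟩ := hrun2val iv hc
        have : π ⟨(π.symm ⟨0, hn⟩ : ℕ) + iv, h'⟩ = π ⟨(π.symm ⟨0, hn⟩ : ℕ) + (π ⟨0, hn⟩ : ℕ) + m, h⟩ :=
          Fin.ext (by rw [hv'])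
        have h2 := π.injective this
        rw [Fin.mk.injEq] at h2
        omega
      have hmid : ¬ iv < (π.symm ⟨0, hn⟩ : ℕ) + (π ⟨0, hn⟩ : ℕ) := by
        intro hc
        have h' : iv - (π ⟨0, hn⟩ : ℕ) < (π.symm ⟨0, hn⟩ : ℕ) := by omega
        have hv' := hrun1val (iv - (π ⟨0, hn⟩ : ℕ)) h'
        have : π ⟨iv - (π ⟨0, hn⟩ : ℕ), _⟩ = π ⟨(π.symm ⟨0, hn⟩ : ℕ) + (π ⟨0, hn⟩ : ℕ) + m, h⟩ :=
          Fin.ext (by rw [hv']; omega)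
        have h2 := π.injective this
        rw [Fin.mk.injEq] at h2
        omega
      -- so b ≤ iv < b + m : value taken by an earlier tail position
      have ht' := IH (iv - ((π.symm ⟨0, hn⟩ : ℕ) + (π ⟨0, hn⟩ : ℕ))) (by omega) (by omega)
      have : π ⟨(π.symm ⟨0, hn⟩ : ℕ) + (π ⟨0, hn⟩ : ℕ) + (iv - ((π.symm ⟨0, hn⟩ : ℕ) + (π ⟨0, hn⟩ : ℕ))), by omega⟩ =
          π ⟨(π.symm ⟨0, hn⟩ : ℕ) + (π ⟨0, hn⟩ : ℕ) + m, h⟩ :=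
        Fin.ext (by rw [ht']; omega)
      have h2 := π.injective this
      rw [Fin.mk.injEq] at h2
      omega
  -- assemble
  refine ⟨(π ⟨0, hn⟩ : ℕ), (π.symm ⟨0, hn⟩ : ℕ) + (π ⟨0, hn⟩ : ℕ), ha, by omega, hbn, ?_⟩
  intro i
  by_cases h1 : (i : ℕ) < (π.symm ⟨0, hn⟩ : ℕ)
  · have hv := hrun1val (i : ℕ) h1
    have heq : (⟨(i : ℕ), _⟩ : Fin n) = i := Fin.ext rfl
    rw [heq] at hv
    apply Fin.ext
    rw [rotf, dif_pos ⟨by omega, hbn⟩]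
    simp only
    rw [Nat.mod_eq_of_lt (by omega)]
    omega
  · by_cases h2 : (i : ℕ) < (π.symm ⟨0, hn⟩ : ℕ) + (π ⟨0, hn⟩ : ℕ)
    · obtain ⟨h', hv⟩ := hrun2val ((i : ℕ) - (π.symm ⟨0, hn⟩ : ℕ)) (by omega)
      have heq : (⟨(π.symm ⟨0, hn⟩ : ℕ) + ((i : ℕ) - (π.symm ⟨0, hn⟩ : ℕ)), h'⟩ : Fin n) = i :=
        Fin.ext (by simp only; omega)
      rw [heq] at hv
      apply Fin.ext
      rw [rotf, dif_pos ⟨h2, hbn⟩]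
      simp only
      have := mod_cases ((i : ℕ) + (π ⟨0, hn⟩ : ℕ)) ((π.symm ⟨0, hn⟩ : ℕ) + (π ⟨0, hn⟩ : ℕ))
        (by omega) (by omega)
      omega
    · have hv := htail ((i : ℕ) - ((π.symm ⟨0, hn⟩ : ℕ) + (π ⟨0, hn⟩ : ℕ))) (by omega)
      have heq : (⟨(π.symm ⟨0, hn⟩ : ℕ) + (π ⟨0, hn⟩ : ℕ) + ((i : ℕ) - ((π.symm ⟨0, hn⟩ : ℕ) + (π ⟨0, hn⟩ : ℕ))), by omega⟩ : Fin n) = i :=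
        Fin.ext (by simp only; omega)
      rw [heq] at hv
      apply Fin.ext
      rw [rotf, dif_neg (by push_neg; intro hc; omega)]
      omega

lemma rot_b_le {n a b1 b2 : ℕ} (ha : 0 < a) (h1 : a < b1) (hb1 : b1 ≤ n)
    (h2 : a < b2) (hb2 : b2 ≤ n)
    (he : (rot a b1 : Equiv.Perm (Fin n)) = rot a b2) : b1 ≤ b2 := by
  by_contra hc
  push_neg at hc
  have hx : b2 - a < n := by omega
  have e : rot a b1 (⟨b2 - a, hx⟩ : Fin n) = rot a b2 (⟨b2 - a, hx⟩ : Fin n) := by rw [he]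
  have v2 : (rot a b2 (⟨b2 - a, hx⟩ : Fin n) : ℕ) = 0 := by
    rw [rot_val_lt _ _ _ (by simp only; omega) hb2]
    simp only
    rw [Nat.sub_add_cancel (le_of_lt h2)]
    exact Nat.mod_self _
  have v1 : (rot a b1 (⟨b2 - a, hx⟩ : Fin n) : ℕ) = b2 := by
    rw [rot_val_lt _ _ _ (by simp only; omega) hb1]
    simp only
    rw [Nat.sub_add_cancel (le_of_lt h2), Nat.mod_eq_of_lt hc]
  have := congrArg Fin.val e
  omega

lemma rot_zero_val {n a b : ℕ} (hn : 0 < n) (ha : 0 < a) (hab : a < b) (hbn : b ≤ n) :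
    ((rot a b : Equiv.Perm (Fin n)) ⟨0, hn⟩ : ℕ) = a := by
  rw [rot_val_lt _ _ _ (by simp only; omega) hbn]
  simp only [Nat.zero_add]
  exact Nat.mod_eq_of_lt hab

theorem stmt17 (n : ℕ) (hn : 1 ≤ n) :
    (Finset.univ.filter fun π : Equiv.Perm (Fin n) =>
      AvoidsAll (permWord π) [[1,3,2],[3,2,1]]).card = Nat.choose n 2 + 1 := by
  have hn0 : 0 < n := hn
  have hset : (Finset.univ.filter fun π : Equiv.Perm (Fin n) =>
      AvoidsAll (permWord π) [[1,3,2],[3,2,1]]) =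
      insert 1 (((Finset.range n).sigma fun b => Finset.range b).image
        fun q => (rot (q.2 + 1) (q.1 + 1) : Equiv.Perm (Fin n))) := by
    ext π
    simp only [Finset.mem_filter, Finset.mem_univ, true_and, Finset.mem_insert,
      Finset.mem_image, Finset.mem_sigma, Finset.mem_range]
    rw [avoidsAll_iff]
    constructor
    · intro hQ
      by_cases hne : π = 1
      · exact Or.inl hne
      · obtain ⟨a, b, ha, hab, hbn, hall⟩ := main_struct π hQ hne
        refine Or.inr ⟨⟨b - 1, a - 1⟩,
          ⟨by show b - 1 < n; omega, by show a - 1 < b - 1; omega⟩, ?_⟩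
        show (rot (a - 1 + 1) (b - 1 + 1) : Equiv.Perm (Fin n)) = π
        have e1 : b - 1 + 1 = b := by omega
        have e2 : a - 1 + 1 = a := by omega
        rw [e1, e2]
        exact Equiv.ext fun i => ((hall i).trans (rot_apply a b i).symm).symm
    · rintro (rfl | ⟨⟨b', a'⟩, ⟨hb', ha'⟩, rfl⟩)
      · exact Qcond_one
      · have hb2 : b' < n := hb'
        have ha2 : a' < b' := ha'
        exact Qcond_rot (n := n) (a := a' + 1) (b := b' + 1)
          (by omega) (by omega) (by omega)
  rw [hset, Finset.card_insert_of_notMem, Finset.card_image_of_injOn]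
  · rw [Finset.card_sigma]
    simp only [Finset.card_range]
    rw [Finset.sum_range_id, Nat.choose_two_right]
  · rintro ⟨b1, a1⟩ h1 ⟨b2, a2⟩ h2 heq
    have hm1 : b1 < n ∧ a1 < b1 := by
      have := (Finset.mem_sigma.mp h1)
      exact ⟨Finset.mem_range.mp this.1, Finset.mem_range.mp this.2⟩
    have hm2 : b2 < n ∧ a2 < b2 := by
      have := (Finset.mem_sigma.mp h2)
      exact ⟨Finset.mem_range.mp this.1, Finset.mem_range.mp this.2⟩
    obtain ⟨hbn1, hab1⟩ := hm1
    obtain ⟨hbn2, hab2⟩ := hm2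
    have heq' : (rot (a1 + 1) (b1 + 1) : Equiv.Perm (Fin n)) = rot (a2 + 1) (b2 + 1) := heq
    clear heq
    have ha : a1 = a2 := by
      have e : ((rot (a1+1) (b1+1) : Equiv.Perm (Fin n)) ⟨0, hn0⟩ : ℕ) =
          ((rot (a2+1) (b2+1) : Equiv.Perm (Fin n)) ⟨0, hn0⟩ : ℕ) := by rw [heq']
      rw [rot_zero_val hn0 (by omega) (by omega) (by omega),
        rot_zero_val hn0 (by omega) (by omega) (by omega)] at e
      omega
    obtain rfl : a1 = a2 := ha
    have hle1 : b1 + 1 ≤ b2 + 1 :=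
      rot_b_le (n := n) (a := a1 + 1) (b1 := b1 + 1) (b2 := b2 + 1)
        (by omega) (by omega) (by omega) (by omega) (by omega) heq'
    have hle2 : b2 + 1 ≤ b1 + 1 :=
      rot_b_le (n := n) (a := a1 + 1) (b1 := b2 + 1) (b2 := b1 + 1)
        (by omega) (by omega) (by omega) (by omega) (by omega) heq'.symm
    obtain rfl : b1 = b2 := by omega
    rfl
  · simp only [Finset.mem_image, Finset.mem_sigma, Finset.mem_range]
    rintro ⟨⟨b', a'⟩, ⟨hb', ha'⟩, hrot⟩
    have hb2 : b' < n := hb'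
    have ha2 : a' < b' := ha'
    have hrot' : (rot (a' + 1) (b' + 1) : Equiv.Perm (Fin n)) = 1 := hrot
    have e : ((rot (a'+1) (b'+1) : Equiv.Perm (Fin n)) ⟨0, hn0⟩ : ℕ) =
        ((1 : Equiv.Perm (Fin n)) ⟨0, hn0⟩ : ℕ) := by rw [hrot']
    rw [rot_zero_val hn0 (by omega) (by omega) (by omega)] at e
    simp at e
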